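/- Let p be a prime and d ≥ 2 with p ∤ d. Let λ = (d−1)/d. If p ≡ 1 (mod d), then all digits of the non-terminating base p expansion of λ are equal; if p ≢ 1 (mod d), then the first digit of λ is strictly greater than some later digit. In particular, when p ≢ 1 (mod d), the rational number 1 − 1/d cannot be the F-pure threshold of any polynomial in characteristic p (since the first base p digit of an F-pure threshold is always its minimal digit). -/

import Mathlib

open MvPolynomial

/-- The `e`-th truncation of the non-terminating base `p` expansion of `α ∈ (0,1]`:
the unique multiple of `p^{-e}` with `⟨α⟩_e < α ≤ ⟨α⟩_e + p^{-e}`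
(with the convention `⟨α⟩_e = 0` for `α ≤ 0`). -/
noncomputable def trunc (p e : ℕ) (α : ℝ) : ℝ :=
  if α ≤ 0 then 0 else (⌈α * (p : ℝ) ^ e⌉ - 1) / (p : ℝ) ^ e

/-- The `e`-th digit (`e ≥ 1`) of the non-terminating base `p` expansion of `α ∈ (0,1]`,
namely `p^e ⟨α⟩_e - p^e ⟨α⟩_{e-1}`. -/
noncomputable def digit (p e : ℕ) (α : ℝ) : ℤ :=
  (⌈α * (p : ℝ) ^ e⌉ - 1) - p * (⌈α * (p : ℝ) ^ (e - 1)⌉ - 1)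

/-- Least positive residue of `m` modulo `b`: the unique `r` with `1 ≤ r ≤ b`, `r ≡ m (mod b)`. -/
def lpr (m b : ℤ) : ℤ := if m % b = 0 then b else m % b

/-- The `e`-th Frobenius power `m^{[p^e]} = (x_1^{p^e}, …, x_n^{p^e})`. -/
noncomputable def frobPow (p n : ℕ) (K : Type*) [Field K] (e : ℕ) :
    Ideal (MvPolynomial (Fin n) K) :=
  Ideal.span (Set.range fun i => (X i : MvPolynomial (Fin n) K) ^ p ^ e)

/-- `ν_f(p^e) = max { N | f^N ∉ m^{[p^e]} }`. -/
noncomputable def nu (p : ℕ) {n : ℕ} {K : Type*} [Field K]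
    (f : MvPolynomial (Fin n) K) (e : ℕ) : ℕ :=
  sSup {N : ℕ | f ^ N ∉ frobPow p n K e}

/-- The F-pure threshold `fpt(f) = lim_e ν_f(p^e)/p^e`; since the sequence is
non-decreasing and bounded, the limit equals the supremum. -/
noncomputable def fpt (p : ℕ) {n : ℕ} {K : Type*} [Field K]
    (f : MvPolynomial (Fin n) K) : ℝ :=
  ⨆ e : ℕ, (nu p f e : ℝ) / (p : ℝ) ^ e

/-- The maximal ideal `m = (x_1, …, x_n)`. -/
noncomputable def mIdeal (n : ℕ) (K : Type*) [Field K] : Ideal (MvPolynomial (Fin n) K) :=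
  Ideal.span (Set.range (X : Fin n → MvPolynomial (Fin n) K))

/-!
Write `r_e` for the least positive residue of `a p^e` modulo `b`. Since `⌈m / b⌉ - 1 = (m - r) / b`
for `r` the least positive residue of `m`, the digits of `a / b` satisfy
`b λ^{(e+1)} = p r_e - r_{e+1}`, and for `a / b = (d - 1) / d` one has `r_e = d - (p^e mod d)`.
If `p ≡ 1 (mod d)` all `r_e` agree. Otherwise pick `e ≥ 1` with `p^e mod d` maximal: then
`p^{e+1} mod d ≤ p^e mod d` and `2 ≤ p mod d ≤ p^e mod d` make the `(e+1)`-st digit smaller than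
the first.

For `f ∈ m`, the Frobenius and a minimal-monomial argument give
`p ν(e) + ν(1) ≤ ν(e+1)` and `ν(e+1) + 1 ≤ p (ν(e) + 1)`, so `ν(e)/p^e` increases to `fpt f`
while `(ν(e) + 1)/p^e` decreases to it. When no `fpt f · p^e` is an integer this forces
`ν(e) = ⌈fpt f · p^e⌉ - 1`, so the `(e+1)`-st digit `ν(e+1) - p ν(e)` is at least `ν(1)`, the
first digit. As `(d - 1)/d · p^e ∉ ℤ` when `p ∤ d`, this contradicts the digit found above.
-/

section LeastPositiveResidue

variable {m b : ℤ}

lemma one_le_lpr (hb : 0 < b) : 1 ≤ lpr m b := by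
  unfold lpr
  split_ifs with h
  · omega
  · have := Int.emod_nonneg m hb.ne'
    omega

lemma lpr_le (hb : 0 < b) : lpr m b ≤ b := by
  unfold lpr
  split_ifs
  · rfl
  · exact (Int.emod_lt_of_pos m hb).le

lemma dvd_sub_lpr : b ∣ m - lpr m b := by
  unfold lpr
  split_ifs with h
  · exact dvd_sub (Int.dvd_of_emod_eq_zero h) dvd_rfl
  · exact Int.dvd_self_sub_emod

lemma lpr_add_mul_self (k : ℤ) : lpr (m + b * k) b = lpr m b := by
  simp only [lpr, Int.add_mul_emod_self_left]

lemma lpr_neg (hb : 0 < b) : lpr (-m) b = b - m % b := by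
  unfold lpr
  by_cases h : b ∣ m
  · simp [Int.emod_eq_zero_of_dvd h, Int.emod_eq_zero_of_dvd (dvd_neg.2 h)]
  · have hm : m % b ≠ 0 := mt Int.dvd_of_emod_eq_zero h
    have := Int.emod_lt_of_pos m hb
    rw [Int.neg_emod, if_neg h, Int.natAbs_of_nonneg hb.le, if_neg (by omega)]

lemma mul_ceil_div_sub_one (hb : 0 < b) (m : ℤ) :
    b * (⌈(m : ℝ) / b⌉ - 1) = m - lpr m b := by
  obtain ⟨q, hq⟩ := dvd_sub_lpr (m := m) (b := b)
  have hr₁ : (1 : ℝ) ≤ lpr m b := by exact_mod_cast one_le_lpr hb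
  have hr₂ : (lpr m b : ℝ) ≤ b := by exact_mod_cast lpr_le hb
  have hbR : (0 : ℝ) < b := by exact_mod_cast hb
  have hm : (m : ℝ) = b * q + lpr m b := by
    rw [← sub_eq_iff_eq_add]; exact_mod_cast hq
  have hceil : ⌈(m : ℝ) / b⌉ = q + 1 := by
    rw [Int.ceil_eq_iff, hm, lt_div_iff₀ hbR, div_le_iff₀ hbR]
    push_cast
    constructor <;> nlinarith
  rw [hceil, hq]
  ring

end LeastPositiveResidue

theorem mul_digit_succ_intCast_div (p : ℕ) {b : ℤ} (hb : 0 < b) (a : ℤ) (e : ℕ) :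
    b * digit p (e + 1) ((a : ℝ) / b) = p * lpr (a * p ^ e) b - lpr (a * p ^ (e + 1)) b := by
  have hcast : ∀ k, (a : ℝ) / b * (p : ℝ) ^ k = ((a * p ^ k : ℤ) : ℝ) / b := fun k => by
    push_cast; ring
  have h := mul_ceil_div_sub_one hb (a * p ^ e)
  have h' := mul_ceil_div_sub_one hb (a * p ^ (e + 1))
  rw [digit, Nat.add_sub_cancel, hcast, hcast]
  linear_combination h' - (p : ℤ) * h

lemma lpr_pred_mul_pow (p : ℕ) {d : ℕ} (hd : 0 < d) (e : ℕ) :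
    lpr (((d : ℤ) - 1) * p ^ e) d = d - ((p ^ e % d : ℕ) : ℤ) := by
  rw [show ((d : ℤ) - 1) * p ^ e = -(p : ℤ) ^ e + d * p ^ e by ring, lpr_add_mul_self,
    lpr_neg (by exact_mod_cast hd)]
  push_cast
  rfl

theorem mul_digit_succ_pred_div_self (p : ℕ) {d : ℕ} (hd : 0 < d) (e : ℕ) :
    (d : ℤ) * digit p (e + 1) (((d : ℝ) - 1) / d) =
      p * (d - ((p ^ e % d : ℕ) : ℤ)) - (d - ((p ^ (e + 1) % d : ℕ) : ℤ)) := by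
  have h := mul_digit_succ_intCast_div p (b := d) (by exact_mod_cast hd) (d - 1) e
  push_cast at h
  rw [h, lpr_pred_mul_pow p hd, lpr_pred_mul_pow p hd]

theorem digit_pred_div_self_eq_digit_one {p d : ℕ} (hd : 0 < d) (h : p % d = 1 % d) (e : ℕ) :
    digit p (e + 1) (((d : ℝ) - 1) / d) = digit p 1 (((d : ℝ) - 1) / d) := by
  have hpow : ∀ k, p ^ k % d = 1 % d := fun k => by
    simpa [Nat.ModEq] using (show p ≡ 1 [MOD d] from h).pow k
  have hₑ := mul_digit_succ_pred_div_self p hd e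
  have h₀ := mul_digit_succ_pred_div_self p hd 0
  rw [hpow, hpow] at hₑ h₀
  exact mul_left_cancel₀ (by exact_mod_cast hd.ne' : (d : ℤ) ≠ 0) (hₑ.trans h₀.symm)

theorem exists_digit_pred_div_self_lt_digit_one {p d : ℕ} (hd : 0 < d) (h : 2 ≤ p % d) :
    ∃ e, digit p (e + 1) (((d : ℝ) - 1) / d) < digit p 1 (((d : ℝ) - 1) / d) := by
  have hd2 : 1 < d := by have := Nat.mod_lt p hd; omega
  obtain ⟨_, ⟨e, rfl⟩, he⟩ := Set.exists_max_image (Set.range fun k => p ^ (k + 1) % d) id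
    ((Set.finite_Iio d).subset (Set.range_subset_iff.2 fun k => Nat.mod_lt _ hd))
    ⟨_, 0, rfl⟩
  have hmax : ∀ k, p ^ (k + 1) % d ≤ p ^ (e + 1) % d := fun k => he _ ⟨k, rfl⟩
  refine ⟨e + 1, lt_of_mul_lt_mul_left (a := (d : ℤ)) ?_ (by positivity)⟩
  rw [mul_digit_succ_pred_div_self p hd, mul_digit_succ_pred_div_self p hd, pow_zero,
    Nat.mod_eq_of_lt hd2, zero_add, pow_one]
  have h₁ : ((p % d : ℕ) : ℤ) ≤ ((p ^ (e + 1) % d : ℕ) : ℤ) := by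
    exact_mod_cast by simpa using hmax 0
  have h₂ : ((p ^ (e + 1 + 1) % d : ℕ) : ℤ) ≤ ((p ^ (e + 1) % d : ℕ) : ℤ) := by
    exact_mod_cast hmax (e + 1)
  have h₃ : (2 : ℤ) ≤ ((p % d : ℕ) : ℤ) := by exact_mod_cast h
  have h₄ : ((p % d : ℕ) : ℤ) ≤ p := by exact_mod_cast Nat.mod_le p d
  have h₅ : (0 : ℤ) ≤ ((p ^ (e + 1) % d : ℕ) : ℤ) - 1 := by linarith
  rw [Nat.cast_one]
  nlinarith [mul_le_mul_of_nonneg_right h₄ h₅]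

lemma pred_div_self_mul_pow_ne_intCast {p d : ℕ} (hpd : p.Coprime d) (hd : 1 < d) (e : ℕ)
    (m : ℤ) : ((d : ℝ) - 1) / d * (p : ℝ) ^ e ≠ m := by
  intro h
  have hdR : (d : ℝ) ≠ 0 := by positivity
  have hZ : ((d : ℤ) - 1) * p ^ e = d * m := by
    rw [div_mul_eq_mul_div, div_eq_iff hdR] at h
    exact_mod_cast h.trans (mul_comm _ _)
  have hdvd : (d : ℤ) ∣ ((p ^ e : ℕ) : ℤ) := ⟨p ^ e - m, by push_cast; linear_combination -hZ⟩
  have := ((hpd.pow_left e).symm.eq_one_of_dvd (Int.natCast_dvd_natCast.mp hdvd))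
  omega

section FrobeniusPower

variable {p n : ℕ} {K : Type*} [Field K]

lemma mem_frobPow_iff {e : ℕ} {g : MvPolynomial (Fin n) K} :
    g ∈ frobPow p n K e ↔ ∀ m ∈ g.support, ∃ i, p ^ e ≤ m i := by
  have hs : (Set.range fun i => (X i : MvPolynomial (Fin n) K) ^ p ^ e)
      = (monomial · 1) '' Set.range fun i : Fin n => Finsupp.single i (p ^ e) := by
    ext
    simp [X_pow_eq_monomial]
  rw [frobPow, hs, mem_ideal_span_monomial_image]
  simp [Finsupp.single_le_iff]

lemma one_notMem_frobPow (hp : 0 < p) (e : ℕ) :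
    (1 : MvPolynomial (Fin n) K) ∉ frobPow p n K e := by
  rw [mem_frobPow_iff]
  intro h
  obtain ⟨i, hi⟩ := h 0 (by simp)
  simp only [Finsupp.coe_zero, Pi.zero_apply, Nat.le_zero, pow_eq_zero_iff'] at hi
  exact hp.ne' hi.1

lemma frobPow_zero : frobPow p n K 0 = mIdeal n K := by
  simp [frobPow, mIdeal]

variable [CharP K p] [Fact p.Prime]

lemma pow_char_mem_frobPow_succ {e : ℕ} {h : MvPolynomial (Fin n) K}
    (hh : h ∈ frobPow p n K e) : h ^ p ∈ frobPow p n K (e + 1) := by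
  induction hh using Submodule.span_induction with
  | mem x hx =>
    obtain ⟨i, rfl⟩ := hx
    rw [← pow_mul, ← pow_succ]
    exact Ideal.subset_span ⟨i, rfl⟩
  | zero => rw [zero_pow (Fact.out : p.Prime).ne_zero]; exact zero_mem _
  | add x y _ _ hx hy => rw [add_pow_char]; exact add_mem hx hy
  | smul a x _ hx => rw [smul_eq_mul, mul_pow]; exact Ideal.mul_mem_left _ _ hx

lemma coeff_pow_char_mul {g h : MvPolynomial (Fin n) K} {m u : Fin n →₀ ℕ}
    (hu : ∀ i, u i < p) (hm : ∀ w ∈ g.support, w ≤ m → w = m) :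
    coeff (p • m + u) (g ^ p * h) = coeff m g ^ p * coeff u h := by
  have hpow : g ^ p = ∑ w ∈ g.support, monomial (p • w) (coeff w g ^ p) := by
    conv_lhs => rw [g.as_sum]
    rw [sum_pow_char]
    simp [monomial_pow]
  rw [hpow, Finset.sum_mul, coeff_sum]
  classical
  rw [Finset.sum_eq_single m]
  · rw [coeff_monomial_mul', if_pos le_self_add, add_tsub_cancel_left]
  · intro w hw hwm
    rw [coeff_monomial_mul', if_neg]
    intro hle
    refine hwm (hm w hw fun i => ?_)
    have h₁ : p * w i ≤ p * m i + u i := by simpa using hle i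
    have h₂ := hu i
    by_contra! hlt
    nlinarith
  · intro hm'
    simp [notMem_support_iff.1 hm', (Fact.out : p.Prime).ne_zero]

/-- Take `m` minimal among the monomials of `g` outside `m^[p^a]` and `u` a monomial of `h`
outside `m^[p]`: no other monomial of `g ^ p * h` can reach `p • m + u`. -/
theorem pow_char_mul_notMem_frobPow {a : ℕ} {g h : MvPolynomial (Fin n) K}
    (hg : g ∉ frobPow p n K a) (hh : h ∉ frobPow p n K 1) :
    g ^ p * h ∉ frobPow p n K (a + 1) := by
  simp only [mem_frobPow_iff, pow_one, not_forall, not_exists, not_le] at hg hh ⊢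
  obtain ⟨u, hu, hup⟩ := hh
  classical
  obtain ⟨m, hm⟩ := Finset.exists_minimal
    (s := g.support.filter fun w => ∀ i, w i < p ^ a) (by simpa [Finset.Nonempty] using hg)
  simp only [Finset.mem_filter] at hm
  have hcoeff := coeff_pow_char_mul (h := h) hup fun w hw hwm =>
    le_antisymm hwm (hm.2 ⟨hw, fun i => (hwm i).trans_lt (hm.1.2 i)⟩ hwm)
  refine ⟨p • m + u, ?_, fun i => ?_⟩
  · rw [mem_support_iff, hcoeff]
    exact mul_ne_zero (pow_ne_zero _ (mem_support_iff.1 hm.1.1)) (mem_support_iff.1 hu)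
  · have h₁ := hm.1.2 i
    have h₂ := hup i
    simp only [Finsupp.add_apply, Finsupp.smul_apply, smul_eq_mul, pow_succ]
    nlinarith

end FrobeniusPower

section Nu

variable {p n : ℕ} {K : Type*} [Field K] {f : MvPolynomial (Fin n) K}

lemma le_mul_pow_of_pow_notMem_frobPow (hf : f ∈ mIdeal n K) {N e : ℕ}
    (h : f ^ N ∉ frobPow p n K e) : N ≤ n * p ^ e := by
  simp only [mem_frobPow_iff, not_forall, not_exists, not_le] at h
  obtain ⟨x, hx, hxlt⟩ := h
  calc N ≤ x.degree := (mem_pow_idealOfVars_iff N (f ^ N)).1 (Ideal.pow_mem_pow hf N) x hx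
    _ = ∑ i, x i := Finsupp.degree_eq_sum x
    _ ≤ ∑ _i : Fin n, p ^ e := Finset.sum_le_sum fun i _ => (hxlt i).le
    _ = n * p ^ e := by simp

theorem pow_notMem_frobPow_iff_le_nu (hp : 0 < p) (hf : f ∈ mIdeal n K) {N e : ℕ} :
    f ^ N ∉ frobPow p n K e ↔ N ≤ nu p f e := by
  have hbdd : BddAbove {N : ℕ | f ^ N ∉ frobPow p n K e} :=
    ⟨n * p ^ e, fun _ => le_mul_pow_of_pow_notMem_frobPow hf⟩
  refine ⟨fun h => le_csSup hbdd h, fun hN hmem => ?_⟩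
  have hnu : f ^ nu p f e ∉ frobPow p n K e :=
    Nat.sSup_mem ⟨0, by simpa using one_notMem_frobPow hp e⟩ hbdd
  apply hnu
  rw [← Nat.add_sub_cancel' hN, pow_add]
  exact Ideal.mul_mem_right _ _ hmem

lemma nu_zero (hp : 0 < p) (hf : f ∈ mIdeal n K) : nu p f 0 = 0 :=
  Nat.le_zero.1 <| not_lt.1 fun h =>
    (pow_notMem_frobPow_iff_le_nu hp hf).2 h (by rwa [pow_one, frobPow_zero])

variable [CharP K p] [Fact p.Prime]

lemma nu_succ_add_one_le (hf : f ∈ mIdeal n K) (e : ℕ) :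
    nu p f (e + 1) + 1 ≤ p * (nu p f e + 1) := by
  have hp : 0 < p := (Fact.out : p.Prime).pos
  by_contra! h
  have hmem : f ^ (nu p f e + 1) ∈ frobPow p n K e := by
    by_contra h'
    simpa using (pow_notMem_frobPow_iff_le_nu hp hf).1 h'
  refine (pow_notMem_frobPow_iff_le_nu hp hf).2 (Nat.le_of_lt_succ h) ?_
  rw [mul_comm, pow_mul]
  exact pow_char_mem_frobPow_succ hmem

lemma mul_nu_add_nu_one_le (hf : f ∈ mIdeal n K) (e : ℕ) :
    p * nu p f e + nu p f 1 ≤ nu p f (e + 1) := by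
  have hp : 0 < p := (Fact.out : p.Prime).pos
  have hg : f ^ nu p f e ∉ frobPow p n K e := (pow_notMem_frobPow_iff_le_nu hp hf).2 le_rfl
  have hh : f ^ nu p f 1 ∉ frobPow p n K 1 := (pow_notMem_frobPow_iff_le_nu hp hf).2 le_rfl
  apply (pow_notMem_frobPow_iff_le_nu hp hf).1
  rw [pow_add, mul_comm p, pow_mul]
  exact pow_char_mul_notMem_frobPow hg hh

lemma monotone_nu_div_pow (hf : f ∈ mIdeal n K) :
    Monotone fun e => (nu p f e : ℝ) / (p : ℝ) ^ e := by
  have hp : (0 : ℝ) < p := by exact_mod_cast (Fact.out : p.Prime).pos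
  refine monotone_nat_of_le_succ fun e => ?_
  have h : (p : ℝ) * nu p f e ≤ nu p f (e + 1) := by
    exact_mod_cast (Nat.le_add_right _ _).trans (mul_nu_add_nu_one_le hf e)
  rw [div_le_div_iff₀ (by positivity) (by positivity), pow_succ]
  nlinarith [pow_pos hp e]

lemma antitone_nu_add_one_div_pow (hf : f ∈ mIdeal n K) :
    Antitone fun e => ((nu p f e : ℝ) + 1) / (p : ℝ) ^ e := by
  have hp : (0 : ℝ) < p := by exact_mod_cast (Fact.out : p.Prime).pos
  refine antitone_nat_of_succ_le fun e => ?_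
  have h : (nu p f (e + 1) : ℝ) + 1 ≤ p * (nu p f e + 1) := by
    exact_mod_cast nu_succ_add_one_le hf e
  rw [div_le_div_iff₀ (by positivity) (by positivity), pow_succ]
  nlinarith [pow_pos hp e]

theorem nu_div_pow_le_fpt (hf : f ∈ mIdeal n K) (e : ℕ) :
    (nu p f e : ℝ) / (p : ℝ) ^ e ≤ fpt p f := by
  have hbdd : BddAbove (Set.range fun k => (nu p f k : ℝ) / (p : ℝ) ^ k) := by
    refine ⟨1, ?_⟩
    rintro _ ⟨k, rfl⟩
    simpa [nu_zero (Fact.out : p.Prime).pos hf] using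
      (div_le_div_of_nonneg_right (le_add_of_nonneg_right zero_le_one) (by positivity)).trans
        (antitone_nu_add_one_div_pow hf (Nat.zero_le k))
  exact le_ciSup hbdd e

theorem fpt_le_nu_add_one_div_pow (hf : f ∈ mIdeal n K) (e : ℕ) :
    fpt p f ≤ ((nu p f e : ℝ) + 1) / (p : ℝ) ^ e :=
  ciSup_le fun k => (monotone_nu_div_pow hf (le_max_left k e)).trans <|
    (div_le_div_of_nonneg_right (le_add_of_nonneg_right zero_le_one) (by positivity)).trans
      (antitone_nu_add_one_div_pow hf (le_max_right k e))

theorem nu_eq_ceil_fpt_mul_pow_sub_one (hf : f ∈ mIdeal n K) {e : ℕ}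
    (he : ∀ m : ℤ, fpt p f * (p : ℝ) ^ e ≠ m) : (nu p f e : ℤ) = ⌈fpt p f * (p : ℝ) ^ e⌉ - 1 := by
  have hp : (0 : ℝ) < (p : ℝ) ^ e := by exact_mod_cast pow_pos (Fact.out : p.Prime).pos e
  have hlow := (div_le_iff₀ hp).1 (nu_div_pow_le_fpt hf e)
  have hupp := (le_div_iff₀ hp).1 (fpt_le_nu_add_one_div_pow hf e)
  have hne := he (nu p f e)
  rw [eq_sub_iff_add_eq, eq_comm, Int.ceil_eq_iff]
  push_cast
  constructor
  · exact lt_of_le_of_ne (by linarith) (by simpa [eq_comm] using hne)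
  · exact hupp

theorem digit_one_fpt_le_digit_fpt (hf : f ∈ mIdeal n K)
    (h : ∀ (e : ℕ) (m : ℤ), fpt p f * (p : ℝ) ^ e ≠ m) (e : ℕ) :
    digit p 1 (fpt p f) ≤ digit p (e + 1) (fpt p f) := by
  have hle : (p : ℤ) * nu p f e + nu p f 1 ≤ nu p f (e + 1) := by
    exact_mod_cast mul_nu_add_nu_one_le hf e
  simp only [digit, Nat.add_sub_cancel, Nat.sub_self, ← nu_eq_ceil_fpt_mul_pow_sub_one hf (h _),
    nu_zero (Fact.out : p.Prime).pos hf]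
  push_cast
  linarith

end Nu

/-- for `λ = (d−1)/d` with `p ∤ d`: if `p ≡ 1 (mod d)` all base `p`
digits of `λ` coincide; otherwise the first digit strictly exceeds some later digit,
and consequently `1 − 1/d` is not the F-pure threshold of any polynomial in
characteristic `p`. -/
theorem stmt_19 (p : ℕ) (hp : p.Prime) (d : ℕ) (hd : 2 ≤ d) (hpd : ¬ p ∣ d) :
    (p % d = 1 % d → ∀ e, 1 ≤ e → digit p e (((d : ℝ) - 1) / d) = digit p 1 (((d : ℝ) - 1) / d)) ∧
    (p % d ≠ 1 % d → ∃ e, 1 ≤ e ∧ digit p e (((d : ℝ) - 1) / d) < digit p 1 (((d : ℝ) - 1) / d)) ∧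
    (p % d ≠ 1 % d → ∀ (n : ℕ) (K : Type) (_ : Field K) (_ : CharP K p)
      (f : MvPolynomial (Fin n) K), f ∈ mIdeal n K →
        fpt p f ≠ ((d : ℝ) - 1) / d) := by
  have hd0 : 0 < d := by omega
  have hcop : p.Coprime d := (Nat.Prime.coprime_iff_not_dvd hp).2 hpd
  have hdigit : p % d ≠ 1 % d →
      ∃ e, digit p (e + 1) (((d : ℝ) - 1) / d) < digit p 1 (((d : ℝ) - 1) / d) := fun h => by
    have hp0 : p % d ≠ 0 := fun h0 => by
      have := hcop.symm.eq_one_of_dvd (Nat.dvd_of_mod_eq_zero h0)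
      omega
    rw [Nat.mod_eq_of_lt hd] at h
    exact exists_digit_pred_div_self_lt_digit_one hd0 (by omega)
  refine ⟨fun h e he => ?_, fun h => ?_, fun h n K _ _ f hf hfpt => ?_⟩
  · obtain ⟨e, rfl⟩ := Nat.exists_eq_add_of_le' he
    exact digit_pred_div_self_eq_digit_one hd0 h e
  · obtain ⟨e, he⟩ := hdigit h
    exact ⟨e + 1, by omega, he⟩
  · have := Fact.mk hp
    obtain ⟨e, he⟩ := hdigit h
    refine he.not_ge ?_
    rw [← hfpt]
    exact digit_one_fpt_le_digit_fpt hf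
      (fun k m => hfpt ▸ pred_div_self_mul_pow_ne_intCast hcop (by omega) k m) e
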